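/- arXiv:1407.4968 — 6 statements merged into one kernel-verified Lean document; each statement's English description precedes it below -/
import Mathlib

section
/- Let L be a (1,1) tensor field (endomorphism of the tangent bundle) on a smooth manifold M, α a 1-form, and X, Y vector fields. Then d_L(Lα)(X,Y) = dα(LX, LY) + α(N_L(X,Y)), where d_L = i_L∘d − d∘i_L and N_L is the Nijenhuis torsion of L defined by N_L(X,Y) = [LX,LY] − L[LX,Y] − L[X,LY] + L²[X,Y]. -/
noncomputable section

variable {E : Type*} [NormedAddCommGroup E] [NormedSpace ℝ E]

/-- Lie bracket of vector fields on the model space `E`. -/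
def lieB (X Y : E → E) : E → E :=
  fun x => fderiv ℝ Y x (X x) - fderiv ℝ X x (Y x)

/-- Action of a `(1,1)` tensor field `L` on a vector field `X`: `(LX)(x) = L x (X x)`. -/
def tAct (L : E → E →L[ℝ] E) (X : E → E) : E → E := fun x => L x (X x)

/-- `i_L` acting on a 1-form: `(i_L α)(X) = α(LX)`. -/
def iL1 (L : E → E →L[ℝ] E) (α : E → E →L[ℝ] ℝ) : E → E →L[ℝ] ℝ :=
  fun x => (α x).comp (L x)

/-- Exterior derivative of a 1-form evaluated on two vector fields, via the
intrinsic formula `dα(X,Y) = X(α(Y)) - Y(α(X)) - α([X,Y])`. -/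
def dOne (α : E → E →L[ℝ] ℝ) (X Y : E → E) : E → ℝ :=
  fun x => fderiv ℝ (fun y => α y (Y y)) x (X x)
    - fderiv ℝ (fun y => α y (X y)) x (Y x)
    - α x (lieB X Y x)

/-- Nijenhuis torsion of `L`:
`N_L(X,Y) = [LX,LY] - L[LX,Y] - L[X,LY] + L²[X,Y]`. -/
def nijenhuis (L : E → E →L[ℝ] E) (X Y : E → E) : E → E :=
  fun x => lieB (tAct L X) (tAct L Y) x - L x (lieB (tAct L X) Y x)
    - L x (lieB X (tAct L Y) x) + L x (L x (lieB X Y x))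

/-- `(d_L β)(X,Y)` for a 1-form `β`, where `d_L = i_L ∘ d - d ∘ i_L`, so that
`(d_L β)(X,Y) = dβ(LX,Y) + dβ(X,LY) - d(i_L β)(X,Y)`. -/
def dL1 (L : E → E →L[ℝ] E) (β : E → E →L[ℝ] ℝ) (X Y : E → E) : E → ℝ :=
  fun x => dOne β (tAct L X) Y x + dOne β X (tAct L Y) x - dOne (iL1 L β) X Y x

lemma fderiv_app {F : Type*} [NormedAddCommGroup F] [NormedSpace ℝ F]
    (c : E → E →L[ℝ] F) (u : E → E) (hc : ContDiff ℝ (⊤ : ℕ∞) c) (hu : ContDiff ℝ (⊤ : ℕ∞) u)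
    (x v : E) :
    fderiv ℝ (fun y => c y (u y)) x v = fderiv ℝ c x v (u x) + c x (fderiv ℝ u x v) := by
  rw [fderiv_clm_apply (hc.differentiable (by simp) x) (hu.differentiable (by simp) x)]
  simp [ContinuousLinearMap.flip_apply]
  abel

/-- For a `(1,1)` tensor field `L`, a 1-form `α` and vector fields `X, Y`:
`d_L(Lα)(X,Y) = dα(LX,LY) + α(N_L(X,Y))`. -/
theorem dL_of_L_alpha (L : E → E →L[ℝ] E) (α : E → E →L[ℝ] ℝ) (X Y : E → E)
    (hL : ContDiff ℝ (⊤ : ℕ∞) L) (hα : ContDiff ℝ (⊤ : ℕ∞) α)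
    (hX : ContDiff ℝ (⊤ : ℕ∞) X) (hY : ContDiff ℝ (⊤ : ℕ∞) Y) (x : E) :
    dL1 L (iL1 L α) X Y x
      = dOne α (tAct L X) (tAct L Y) x + α x (nijenhuis L X Y x) := by
  have hLX : ContDiff ℝ (⊤ : ℕ∞) fun y => L y (X y) := hL.clm_apply hX
  have hLY : ContDiff ℝ (⊤ : ℕ∞) fun y => L y (Y y) := hL.clm_apply hY
  have hLLX : ContDiff ℝ (⊤ : ℕ∞) fun y => L y (L y (X y)) := hL.clm_apply hLX
  have hLLY : ContDiff ℝ (⊤ : ℕ∞) fun y => L y (L y (Y y)) := hL.clm_apply hLY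
  simp only [dL1, dOne, iL1, nijenhuis, lieB, tAct, ContinuousLinearMap.coe_comp',
    Function.comp]
  simp only [fderiv_app α (fun y => L y (L y (Y y))) hα hLLY x,
    fderiv_app α (fun y => L y (L y (X y))) hα hLLX x,
    fderiv_app α (fun y => L y (Y y)) hα hLY x,
    fderiv_app α (fun y => L y (X y)) hα hLX x,
    fderiv_app L (fun y => L y (Y y)) hL hLY x,
    fderiv_app L (fun y => L y (X y)) hL hLX x,
    fderiv_app L Y hL hY x, fderiv_app L X hL hX x]
  simp only [map_add, map_sub]
  ring
end
end

section
/- Let (V, ω) be a 2m-dimensional symplectic vector space and A : V → V an ω-symmetric endomorphism. Let u ∈ V and suppose the vectors u, Au, …, A^{m-1}u are linearly independent. Then W = span{u, Au, …, A^{m-1}u} is a Lagrangian subspace of (V, ω), i.e. W equals its ω-orthogonal complement. -/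
/-!
For an `ω`-symmetric `A` the value `ω (Aⁱ u) (Aʲ u) = ω u (Aⁱ⁺ʲ u)` depends only on `i + j`,
so it is symmetric in `(i, j)`; since `ω` is also alternating it vanishes, and the Krylov space
`W = span {u, Au, …, Aᵐ⁻¹u}` is isotropic, `W ≤ W^⊥`. By nondegeneracy
`dim W^⊥ = 2m - dim W = m = dim W`, which forces `W = W^⊥`.
-/

open Module Submodule

namespace LinearMap

section SelfAdjoint

variable {R M N : Type*} [CommSemiring R] [AddCommMonoid M] [Module R M]
  [AddCommMonoid N] [Module R N] {B : M →ₗ[R] M →ₗ[R] N} {f : Module.End R M}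

theorem IsSelfAdjoint.pow (hf : B.IsSelfAdjoint f) (n : ℕ) : B.IsSelfAdjoint ⇑(f ^ n) := by
  induction n with
  | zero => exact isAdjointPair_one
  | succ n ih =>
    have h := ih.mul hf
    rwa [← pow_succ, ← pow_succ'] at h

theorem IsSelfAdjoint.apply_pow_apply_pow (hf : B.IsSelfAdjoint f) (u : M) (i j : ℕ) :
    B ((f ^ i) u) ((f ^ j) u) = B u ((f ^ (i + j)) u) := by
  rw [hf.pow i, ← Module.End.mul_apply, ← pow_add]

end SelfAdjoint

section Alternating

variable {R M N : Type*} [CommSemiring R] [AddCommMonoid M] [Module R M]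
  [AddCommGroup N] [Module R N] {B : M →ₗ[R] M →ₗ[R] N}

theorem IsAlt.eq_zero_of_apply_comm [IsAddTorsionFree N] (hB : B.IsAlt) {x y : M}
    (h : B x y = B y x) : B x y = 0 :=
  self_eq_neg.1 (h.trans (hB.neg x y).symm)

theorem IsAlt.apply_pow_apply_pow_eq_zero [IsAddTorsionFree N] (hB : B.IsAlt)
    {f : Module.End R M} (hf : B.IsSelfAdjoint f) (u : M) (i j : ℕ) :
    B ((f ^ i) u) ((f ^ j) u) = 0 :=
  hB.eq_zero_of_apply_comm <| by
    rw [hf.apply_pow_apply_pow, hf.apply_pow_apply_pow, add_comm]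

end Alternating

namespace BilinForm

variable {R M : Type*} [CommRing R] [AddCommGroup M] [Module R M] {B : LinearMap.BilinForm R M}

theorem span_le_orthogonal_span {S : Set M} (h : ∀ x ∈ S, ∀ y ∈ S, B x y = 0) :
    span R S ≤ B.orthogonal (span R S) := by
  refine span_le.2 fun y hy => mem_orthogonal_iff.2 fun x hx => ?_
  have hker : span R S ≤ ker (B.flip y) := span_le.2 fun x' hx' => h x' hx' y hy
  exact hker hx

theorem eq_orthogonal_of_le_orthogonal_of_finrank_eq_two_mul {K V : Type*} [Field K]
    [AddCommGroup V] [Module K V] [FiniteDimensional K V] {B : LinearMap.BilinForm K V}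
    (hB : B.Nondegenerate) {W : Submodule K V} (hW : W ≤ B.orthogonal W)
    (hdim : finrank K V = 2 * finrank K W) : W = B.orthogonal W :=
  eq_of_le_of_finrank_le hW (by rw [finrank_orthogonal hB, hdim]; omega)

end BilinForm

end LinearMap

section Krylov

variable {R M : Type*} [CommRing R] [AddCommGroup M] [Module R M]

def krylovSubspace (f : Module.End R M) (u : M) (m : ℕ) : Submodule R M :=
  span R (Set.range fun k : Fin m => (f ^ (k : ℕ)) u)

theorem finrank_krylovSubspace [Nontrivial R] [StrongRankCondition R] {f : Module.End R M}
    {u : M} {m : ℕ}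
    (h : LinearIndependent R fun k : Fin m => (f ^ (k : ℕ)) u) :
    finrank R (krylovSubspace f u m) = m := by
  rw [krylovSubspace, finrank_span_eq_card h, Fintype.card_fin]

theorem krylovSubspace_le_orthogonal [IsAddTorsionFree R] {B : LinearMap.BilinForm R M}
    (hB : B.IsAlt) {f : Module.End R M} (hf : B.IsSelfAdjoint f) (u : M) (m : ℕ) :
    krylovSubspace f u m ≤ B.orthogonal (krylovSubspace f u m) :=
  LinearMap.BilinForm.span_le_orthogonal_span <| by
    rintro _ ⟨i, rfl⟩ _ ⟨j, rfl⟩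
    exact hB.apply_pow_apply_pow_eq_zero hf u i j

end Krylov

/-- If `A` is symmetric with respect to a symplectic form `ω` on a
`2m`-dimensional real vector space and the vectors `u, Au, …, A^{m-1}u` are
linearly independent, then they span a Lagrangian subspace: the span equals its
`ω`-orthogonal complement. -/
theorem krylov_lagrangian {V : Type*} [AddCommGroup V] [Module ℝ V]
    [FiniteDimensional ℝ V] (m : ℕ)
    (hdim : Module.finrank ℝ V = 2 * m)
    (ω : LinearMap.BilinForm ℝ V) (halt : ∀ v, ω v v = 0)
    (hnd : ω.Nondegenerate)
    (A : V →ₗ[ℝ] V) (hsym : ∀ v w, ω (A v) w = ω v (A w)) (u : V)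
    (hind : LinearIndependent ℝ (fun k : Fin m => (A ^ (k : ℕ)) u)) :
    Submodule.span ℝ (Set.range fun k : Fin m => (A ^ (k : ℕ)) u)
      = ω.orthogonal (Submodule.span ℝ (Set.range fun k : Fin m => (A ^ (k : ℕ)) u)) := by
  change krylovSubspace A u m = ω.orthogonal (krylovSubspace A u m)
  exact LinearMap.BilinForm.eq_orthogonal_of_le_orthogonal_of_finrank_eq_two_mul hnd
    (krylovSubspace_le_orthogonal halt hsym u m) (by rw [hdim, finrank_krylovSubspace hind])
end

section
/- With ω_R = Σₗ λₗ(Qˡ) dPₗ∧dQˡ and X_h as above, and with the eigenvector fields X₀ = ∂/∂t and Xᵢ = (∂K/∂Pᵢ)∂/∂Qᵢ − (∂K/∂Qᵢ)∂/∂Pᵢ (no sum), one has (L_{X_h}ω_R)(Xᵢ, X₀) = λᵢ( K_{Qⁱt} K_{Pᵢ} − K_{Pᵢt} K_{Qⁱ} ) for each i = 1,…,n (no summation). -/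
noncomputable section

/-- The phase space `(J¹τ)* ≅ ℝ^{2n+1}` with coordinates `(t, Q, P)`. -/
abbrev Pha (n : ℕ) : Type := ℝ × (Fin n → ℝ) × (Fin n → ℝ)

variable {n : ℕ}

/-- The coordinate vector `∂/∂t`. -/
def eT : Pha n := (1, 0, 0)

/-- The coordinate vector `∂/∂Qⁱ`. -/
def eQ (i : Fin n) : Pha n := (0, Pi.single i 1, 0)

/-- The coordinate vector `∂/∂Pᵢ`. -/
def eP (i : Fin n) : Pha n := (0, 0, Pi.single i 1)

/-- First partial derivative of `f` at `x` in direction `v`. -/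
def pd (f : Pha n → ℝ) (x v : Pha n) : ℝ := fderiv ℝ f x v

/-- Second partial derivative `∂_u ∂_v f` at `x`. -/
def pd2 (f : Pha n → ℝ) (x u v : Pha n) : ℝ :=
  fderiv ℝ (fun y => fderiv ℝ f y v) x u

/-- The 2-form `ω_R = Σₗ λₗ(Qˡ) dPₗ∧dQˡ`, evaluated at `x` on tangent vectors
`v, w`. -/
def omegaR (lam : Fin n → ℝ → ℝ) (x v w : Pha n) : ℝ :=
  ∑ l, lam l (x.2.1 l) * (v.2.2 l * w.2.1 l - w.2.2 l * v.2.1 l)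

/-- The Hamiltonian vector field
`X_h = ∂/∂t + Σᵢ K_{Pᵢ} ∂/∂Qⁱ - Σᵢ K_{Qⁱ} ∂/∂Pᵢ`. -/
def Xh (K : Pha n → ℝ) (x : Pha n) : Pha n :=
  (1, fun i => pd K x (eP i), fun i => -pd K x (eQ i))

/-- Lie derivative of a (pointwise bilinear) 2-form `ω` along a vector field
`X`, evaluated at `x` on constant tangent vectors `v, w`:
`(L_X ω)(v,w) = X(ω(v,w)) + ω(∇_v X, w) + ω(v, ∇_w X)`. -/
def lieDer (X : Pha n → Pha n) (ω : Pha n → Pha n → Pha n → ℝ)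
    (x v w : Pha n) : ℝ :=
  fderiv ℝ (fun y => ω y v w) x (X x)
    + ω x (fderiv ℝ X x v) w + ω x v (fderiv ℝ X x w)

/-- The eigenvector field `Xᵢ = K_{Pᵢ} ∂/∂Qⁱ - K_{Qⁱ} ∂/∂Pᵢ` (no sum). -/
def Xev (K : Pha n → ℝ) (i : Fin n) (x : Pha n) : Pha n :=
  (0, Pi.single i (pd K x (eP i)), Pi.single i (-pd K x (eQ i)))

/-- `(L_{X_h} ω_R)(Xᵢ, X₀) = λᵢ(Qⁱ) (K_{Qⁱt} K_{Pᵢ} - K_{Pᵢt} K_{Qⁱ})`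
(no summation), where `X₀ = ∂/∂t`. -/
theorem lieDer_omegaR_Xi_X0 (lam : Fin n → ℝ → ℝ)
    (hlam : ∀ l, ContDiff ℝ (⊤ : ℕ∞) (lam l))
    (K : Pha n → ℝ) (hK : ContDiff ℝ (⊤ : ℕ∞) K) (x : Pha n) (i : Fin n) :
    lieDer (Xh K) (omegaR lam) x (Xev K i x) eT =
      lam i (x.2.1 i) *
        (pd2 K x (eQ i) eT * pd K x (eP i) - pd2 K x (eP i) eT * pd K x (eQ i)) := by
  classical
  set B := fderiv ℝ (fderiv ℝ K) x with hBdef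
  have hKd : Differentiable ℝ K := hK.differentiable (by simp)
  have hK'd : Differentiable ℝ (fderiv ℝ K) := (hK.fderiv_right (m := (⊤ : ℕ∞)) (by simp)).differentiable (by simp)
  have hB : HasFDerivAt (fderiv ℝ K) B x := (hK'd x).hasFDerivAt
  have hsymm : ∀ v w, B v w = B w v :=
    second_derivative_symmetric (fun y => (hKd y).hasFDerivAt) hB
  have hcomp : ∀ v : Pha n, HasFDerivAt (fun y => fderiv ℝ K y v)
      ((ContinuousLinearMap.apply ℝ ℝ v).comp B) x := fun v =>
    (ContinuousLinearMap.apply ℝ ℝ v).hasFDerivAt.comp x hB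
  have hpd2 : ∀ u v : Pha n, pd2 K x u v = B u v := by
    intro u v
    simp only [pd2]
    rw [(hcomp v).fderiv]
    rfl
  have hXh : HasFDerivAt (Xh K)
      (((0 : Pha n →L[ℝ] ℝ)).prod
        ((ContinuousLinearMap.pi fun j => (ContinuousLinearMap.apply ℝ ℝ (eP j)).comp B).prod
         (ContinuousLinearMap.pi fun j => -((ContinuousLinearMap.apply ℝ ℝ (eQ j)).comp B)))) x := by
    unfold Xh pd
    exact (hasFDerivAt_const 1 x).prodMk
      ((hasFDerivAt_pi.2 fun j => hcomp (eP j)).prodMk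
        (hasFDerivAt_pi.2 fun j => (hcomp (eQ j)).neg))
  have hu : fderiv ℝ (Xh K) x eT = (0, fun j => B eT (eP j), fun j => -(B eT (eQ j))) := by
    rw [hXh.fderiv]
    rfl
  have h1 : (fun y => omegaR lam y (Xev K i x) eT) = fun _ => 0 := by
    funext y
    simp [omegaR, eT]
  have h2 : ∀ u : Pha n, omegaR lam x u eT = 0 := by
    intro u
    simp [omegaR, eT]
  simp only [lieDer, h1, h2, hu, fderiv_const, Pi.zero_apply, ContinuousLinearMap.zero_apply,
    add_zero, zero_add]
  simp only [omegaR, Xev]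
  rw [Finset.sum_eq_single i]
  · simp [hpd2, Pi.single_eq_same, hsymm eT (eQ i), hsymm eT (eP i), pd]
    ring_nf
    exact Or.inl trivial
  · intro l _ hl
    simp [Pi.single_eq_of_ne hl]
  · intro h
    simp at h
end
end

section
/- With ω_R = Σₗ λₗ(Qˡ) dPₗ∧dQˡ, X_h the Hamiltonian vector field of K with the extra ∂/∂t term, and Xᵢ = K_{Pᵢ}∂/∂Qᵢ − K_{Qⁱ}∂/∂Pᵢ (no sum), one has for i ≠ j: (L_{X_h}ω_R)(Xᵢ, Xⱼ) = (λⱼ−λᵢ)( K_{PᵢQʲ} K_{Qⁱ} K_{Pⱼ} + K_{PⱼQⁱ} K_{Qʲ} K_{Pᵢ} − K_{QⁱQʲ} K_{Pᵢ} K_{Pⱼ} − K_{PᵢPⱼ} K_{Qⁱ} K_{Qʲ} ), with no implicit summation. -/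
noncomputable section

variable {n : ℕ}

/-! ### Auxiliary lemmas -/

lemma fderiv_clm_precomp {E F G : Type*} [NormedAddCommGroup E] [NormedSpace ℝ E]
    [NormedAddCommGroup F] [NormedSpace ℝ F] [NormedAddCommGroup G] [NormedSpace ℝ G]
    (φ : F →L[ℝ] G) {f : E → F} {x : E} (hf : DifferentiableAt ℝ f x) :
    fderiv ℝ (fun y => φ (f y)) x = φ.comp (fderiv ℝ f x) :=
  (φ.hasFDerivAt.comp x hf.hasFDerivAt).fderiv

section K
variable {K : Pha n → ℝ} (hK : ContDiff ℝ (⊤ : ℕ∞) K)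
include hK

lemma diff_fderivK : Differentiable ℝ (fderiv ℝ K) :=
  (hK.fderiv_right (m := 1) (WithTop.coe_le_coe.mpr le_top)).differentiable one_ne_zero

lemma diff_pd (v : Pha n) : Differentiable ℝ (fun y => pd K y v) :=
  (diff_fderivK hK).clm_apply (differentiable_const v)

lemma pd2_eq (x u v : Pha n) : pd2 K x u v = fderiv ℝ (fderiv ℝ K) x u v := by
  unfold pd2
  rw [show (fun y => fderiv ℝ K y v)
        = (fun y => (ContinuousLinearMap.apply ℝ ℝ v) (fderiv ℝ K y)) from rfl,
    fderiv_clm_precomp _ ((diff_fderivK hK) x)]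
  rfl

lemma pd2_symm (x u v : Pha n) : pd2 K x u v = pd2 K x v u := by
  rw [pd2_eq hK, pd2_eq hK]
  exact second_derivative_symmetric (fun y => ((hK.differentiable (by simp)) y).hasFDerivAt)
    ((diff_fderivK hK x).hasFDerivAt) u v

omit hK in
lemma pd2_first (x v w u : Pha n) (a b : ℝ) :
    pd2 K x (a • v + b • w) u = a * pd2 K x v u + b * pd2 K x w u := by
  unfold pd2
  simp [map_add, map_smul, smul_eq_mul]

omit hK in
lemma Xev_eq (x : Pha n) (i : Fin n) :
    Xev K i x = pd K x (eP i) • eQ i + (-pd K x (eQ i)) • eP i := by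
  unfold Xev eQ eP
  refine Prod.ext (by simp) (Prod.ext ?_ ?_) <;>
    · funext l
      simp only [Prod.snd_add, Prod.fst_add, Prod.smul_mk, Pi.add_apply, Pi.smul_apply,
        Pi.single_apply, smul_eq_mul, smul_zero, Pi.zero_apply, add_zero, zero_add]
      split <;> simp

lemma diff_Xh : Differentiable ℝ (Xh K) := by
  unfold Xh
  exact Differentiable.prodMk (differentiable_const (1 : ℝ))
    (Differentiable.prodMk (differentiable_pi.mpr fun l => diff_pd hK (eP l))
      (differentiable_pi.mpr fun l => (diff_pd hK (eQ l)).fun_neg))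

lemma fderiv_Xh_Q (x v : Pha n) (l : Fin n) :
    (fderiv ℝ (Xh K) x v).2.1 l = pd2 K x v (eP l) := by
  set φ : Pha n →L[ℝ] ℝ := (ContinuousLinearMap.proj l).comp
      ((ContinuousLinearMap.fst ℝ (Fin n → ℝ) (Fin n → ℝ)).comp
       (ContinuousLinearMap.snd ℝ ℝ ((Fin n → ℝ) × (Fin n → ℝ)))) with hφ
  have h := fderiv_clm_precomp φ ((diff_Xh hK) x)
  have h1 : (fderiv ℝ (Xh K) x v).2.1 l = φ (fderiv ℝ (Xh K) x v) := rfl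
  have h2 : (fun y => φ (Xh K y)) = fun y => fderiv ℝ K y (eP l) := rfl
  rw [h1, ← ContinuousLinearMap.comp_apply, ← h, h2]
  rfl

lemma fderiv_Xh_P (x v : Pha n) (l : Fin n) :
    (fderiv ℝ (Xh K) x v).2.2 l = -pd2 K x v (eQ l) := by
  set φ : Pha n →L[ℝ] ℝ := (ContinuousLinearMap.proj l).comp
      ((ContinuousLinearMap.snd ℝ (Fin n → ℝ) (Fin n → ℝ)).comp
       (ContinuousLinearMap.snd ℝ ℝ ((Fin n → ℝ) × (Fin n → ℝ)))) with hφ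
  have h := fderiv_clm_precomp φ ((diff_Xh hK) x)
  have h1 : (fderiv ℝ (Xh K) x v).2.2 l = φ (fderiv ℝ (Xh K) x v) := rfl
  have h2 : (fun y => φ (Xh K y)) = fun y => -(fderiv ℝ K y (eQ l)) := rfl
  rw [h1, ← ContinuousLinearMap.comp_apply, ← h, h2, fderiv_fun_neg]
  rfl

end K

lemma omegaR_single_right (lam : Fin n → ℝ → ℝ) (x u : Pha n) (j : Fin n) (c d : ℝ) :
    omegaR lam x u (0, Pi.single j c, Pi.single j d)
      = lam j (x.2.1 j) * (u.2.2 j * c - d * u.2.1 j) := by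
  unfold omegaR
  rw [Finset.sum_eq_single j]
  · simp
  · intro l _ hl
    simp [Pi.single_eq_of_ne hl]
  · simp

lemma omegaR_single_left (lam : Fin n → ℝ → ℝ) (x w : Pha n) (i : Fin n) (a b : ℝ) :
    omegaR lam x (0, Pi.single i a, Pi.single i b) w
      = lam i (x.2.1 i) * (b * w.2.1 i - w.2.2 i * a) := by
  unfold omegaR
  rw [Finset.sum_eq_single i]
  · simp
  · intro l _ hl
    simp [Pi.single_eq_of_ne hl]
  · simp

lemma omegaR_disjoint_zero (lam : Fin n → ℝ → ℝ) {i j : Fin n} (hij : i ≠ j)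
    (y : Pha n) (a b c d : ℝ) :
    omegaR lam y (0, Pi.single i a, Pi.single i b) (0, Pi.single j c, Pi.single j d) = 0 := by
  unfold omegaR
  apply Finset.sum_eq_zero
  intro l _
  rcases eq_or_ne l i with rfl | h
  · simp [Pi.single_eq_of_ne hij]
  · simp [Pi.single_eq_of_ne h]

/-- For `i ≠ j`,
`(L_{X_h} ω_R)(Xᵢ, Xⱼ) = (λⱼ - λᵢ)(K_{PᵢQʲ} K_{Qⁱ} K_{Pⱼ} + K_{PⱼQⁱ} K_{Qʲ} K_{Pᵢ}
  - K_{QⁱQʲ} K_{Pᵢ} K_{Pⱼ} - K_{PᵢPⱼ} K_{Qⁱ} K_{Qʲ})` (no summation). -/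
theorem lieDer_omegaR_Xi_Xj (lam : Fin n → ℝ → ℝ)
    (hlam : ∀ l, ContDiff ℝ (⊤ : ℕ∞) (lam l))
    (K : Pha n → ℝ) (hK : ContDiff ℝ (⊤ : ℕ∞) K) (x : Pha n) (i j : Fin n)
    (hij : i ≠ j) :
    lieDer (Xh K) (omegaR lam) x (Xev K i x) (Xev K j x) =
      (lam j (x.2.1 j) - lam i (x.2.1 i)) *
        (pd2 K x (eP i) (eQ j) * pd K x (eQ i) * pd K x (eP j)
          + pd2 K x (eP j) (eQ i) * pd K x (eQ j) * pd K x (eP i)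
          - pd2 K x (eQ i) (eQ j) * pd K x (eP i) * pd K x (eP j)
          - pd2 K x (eP i) (eP j) * pd K x (eQ i) * pd K x (eQ j)) := by
  unfold lieDer
  -- the first term vanishes since the two (constant) vectors have disjoint support
  have hzero : (fun y => omegaR lam y (Xev K i x) (Xev K j x)) = fun _ => (0 : ℝ) := by
    funext y
    exact omegaR_disjoint_zero lam hij y _ _ _ _
  rw [hzero, fderiv_fun_const]
  simp only [Pi.zero_apply, ContinuousLinearMap.zero_apply, zero_add]
  -- second and third terms
  have hXj : Xev K j x = (0, Pi.single j (pd K x (eP j)), Pi.single j (-pd K x (eQ j))) := rfl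
  have hXi : Xev K i x = (0, Pi.single i (pd K x (eP i)), Pi.single i (-pd K x (eQ i))) := rfl
  rw [show omegaR lam x (fderiv ℝ (Xh K) x (Xev K i x)) (Xev K j x)
        = lam j (x.2.1 j) * ((fderiv ℝ (Xh K) x (Xev K i x)).2.2 j * pd K x (eP j)
            - (-pd K x (eQ j)) * (fderiv ℝ (Xh K) x (Xev K i x)).2.1 j) from by
      rw [hXj]; exact omegaR_single_right lam x _ j _ _,
    show omegaR lam x (Xev K i x) (fderiv ℝ (Xh K) x (Xev K j x))
        = lam i (x.2.1 i) * ((-pd K x (eQ i)) * (fderiv ℝ (Xh K) x (Xev K j x)).2.1 i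
            - (fderiv ℝ (Xh K) x (Xev K j x)).2.2 i * pd K x (eP i)) from by
      rw [hXi]; exact omegaR_single_left lam x _ i _ _]
  rw [fderiv_Xh_Q hK, fderiv_Xh_P hK, fderiv_Xh_Q hK, fderiv_Xh_P hK]
  rw [Xev_eq x i, Xev_eq x j]
  rw [pd2_first, pd2_first, pd2_first, pd2_first]
  rw [pd2_symm hK x (eQ j) (eP i), pd2_symm hK x (eP j) (eP i),
    pd2_symm hK x (eQ j) (eQ i), pd2_symm hK x (eP j) (eQ i)]
  ring
end
end

section
/- Consider on ℝ⁵ with coordinates (t,Q₁,Q₂,P₁,P₂), t in a domain where t>0, the Hamiltonian K(t,Q,P) = t²( P₁² + P₂² + Q₁² + Q₂² + c(P₁Q₁ + P₂Q₂) + ½α₁(Q₁³+Q₂³) + (1/6)α₂(Q₁³−Q₂³) ), where c, α₁, α₂ are real constants. Then K satisfies both Forbat conditions: for i ≠ j ∈ {1,2}, K_{Pᵢ}(K_{QᵢQⱼ}K_{Pⱼ} − K_{QᵢPⱼ}K_{Qⱼ}) = K_{Qᵢ}(K_{PᵢQⱼ}K_{Pⱼ} − K_{PᵢPⱼ}K_{Qⱼ}),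 and for each i, K_{Pᵢ}K_{Qᵢt} = K_{Qᵢ}K_{Pᵢt}. -/
noncomputable section

variable {n : ℕ}

/-- The separable Hamiltonian (6.8) of the example. -/
def Kex (c a1 a2 : ℝ) : Pha 2 → ℝ := fun x =>
  x.1 ^ 2 * ((x.2.2 0) ^ 2 + (x.2.2 1) ^ 2 + (x.2.1 0) ^ 2 + (x.2.1 1) ^ 2
    + c * (x.2.2 0 * x.2.1 0 + x.2.2 1 * x.2.1 1)
    + (1 / 2) * a1 * ((x.2.1 0) ^ 3 + (x.2.1 1) ^ 3)
    + (1 / 6) * a2 * ((x.2.1 0) ^ 3 - (x.2.1 1) ^ 3))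

/-! `Kex` is `t² (g₁(Q¹, P₁) + g₂(Q², P₂))` with `gₗ(q, p) = p² + q² + c p q + kₗ q³`.
Additive separability makes every mixed second derivative between the two degrees of freedom
vanish, so both sides of the first condition are zero. For `K = φ(t) S(Q, P)` and any direction
`w` in `(Q, P)` we have `K_w = φ S_w` and `K_{w t} = φ' S_w`, so both sides of the second
condition equal `φ φ' S_{Qⁱ} S_{Pᵢ}`. -/

def blockProj (l : Fin n) : Pha n →L[ℝ] ℝ × ℝ :=
  (((ContinuousLinearMap.proj l).comp (ContinuousLinearMap.fst ℝ _ _)).prod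
    ((ContinuousLinearMap.proj l).comp (ContinuousLinearMap.snd ℝ _ _))).comp
      (ContinuousLinearMap.snd ℝ ℝ _)

lemma blockProj_apply (l : Fin n) (x : Pha n) : blockProj l x = (x.2.1 l, x.2.2 l) := rfl

lemma blockProj_eT (l : Fin n) : blockProj l eT = 0 := rfl

lemma blockProj_eQ_of_ne {l i : Fin n} (h : l ≠ i) : blockProj l (eQ i) = 0 := by
  simp [blockProj_apply, eQ, h]

lemma blockProj_eP_of_ne {l i : Fin n} (h : l ≠ i) : blockProj l (eP i) = 0 := by
  simp [blockProj_apply, eP, h]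

def blockSum (g : Fin n → ℝ × ℝ → ℝ) (x : Pha n) : ℝ := ∑ l, g l (blockProj l x)

def sepHam (φ : ℝ → ℝ) (g : Fin n → ℝ × ℝ → ℝ) (x : Pha n) : ℝ := φ x.1 * blockSum g x

section

variable {φ : ℝ → ℝ} {g : Fin n → ℝ × ℝ → ℝ}

lemma hasFDerivAt_blockSum (hg : ∀ l, Differentiable ℝ (g l)) (x : Pha n) :
    HasFDerivAt (blockSum g)
      (∑ l, (fderiv ℝ (g l) (blockProj l x)).comp (blockProj l)) x :=
  HasFDerivAt.fun_sum fun l _ => (hg l _).hasFDerivAt.comp x (blockProj l).hasFDerivAt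

lemma fderiv_blockSum_apply (hg : ∀ l, Differentiable ℝ (g l)) (x w : Pha n) :
    fderiv ℝ (blockSum g) x w = ∑ l, fderiv ℝ (g l) (blockProj l x) (blockProj l w) := by
  simp [(hasFDerivAt_blockSum hg x).fderiv]

lemma fderiv_blockSum_apply_of_mem_block (hg : ∀ l, Differentiable ℝ (g l)) {j : Fin n}
    {w : Pha n} (hw : ∀ l ≠ j, blockProj l w = 0) (x : Pha n) :
    fderiv ℝ (blockSum g) x w = fderiv ℝ (g j) (blockProj j x) (blockProj j w) := by
  rw [fderiv_blockSum_apply hg, Finset.sum_eq_single j (fun l _ hl => by simp [hw l hl])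
    (by simp)]

lemma fderiv_sepHam_apply (hφ : Differentiable ℝ φ) (hg : ∀ l, Differentiable ℝ (g l))
    (x v : Pha n) :
    fderiv ℝ (sepHam φ g) x v
      = v.1 * deriv φ x.1 * blockSum g x + φ x.1 * fderiv ℝ (blockSum g) x v := by
  have hK : HasFDerivAt (sepHam φ g) _ x :=
    ((hφ x.1).hasDerivAt.comp_hasFDerivAt x hasFDerivAt_fst).mul (hasFDerivAt_blockSum hg x)
  rw [hK.fderiv, (hasFDerivAt_blockSum hg x).fderiv]
  simp only [add_apply, smul_apply, ContinuousLinearMap.coe_fst', Function.comp_apply,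
    smul_eq_mul]
  ring

lemma pd_sepHam_of_time_eq_zero (hφ : Differentiable ℝ φ) (hg : ∀ l, Differentiable ℝ (g l))
    (x : Pha n) {w : Pha n} (hw : w.1 = 0) :
    pd (sepHam φ g) x w = φ x.1 * fderiv ℝ (blockSum g) x w := by
  simp [pd, fderiv_sepHam_apply hφ hg, hw]

lemma pd2_sepHam_eT (hφ : ContDiff ℝ 2 φ) (hg : ∀ l, Differentiable ℝ (g l))
    (x : Pha n) {u : Pha n} (hu : u.1 = 0) :
    pd2 (sepHam φ g) x u eT = deriv φ x.1 * fderiv ℝ (blockSum g) x u := by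
  have hKt : (fun y => fderiv ℝ (sepHam φ g) y eT) = fun y => deriv φ y.1 * blockSum g y := by
    funext y
    rw [fderiv_sepHam_apply (hφ.differentiable two_ne_zero) hg, fderiv_blockSum_apply hg]
    simp only [blockProj_eT, map_zero, Finset.sum_const_zero, mul_zero, add_zero]
    rw [show (eT : Pha n).1 = 1 from rfl, one_mul]
  have hD : HasFDerivAt (fun y : Pha n => deriv φ y.1 * blockSum g y) _ x :=
    ((hφ.differentiable_deriv_two x.1).hasDerivAt.comp_hasFDerivAt x hasFDerivAt_fst).mul
      (hasFDerivAt_blockSum hg x)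
  simp [pd2, hKt, hD.fderiv, (hasFDerivAt_blockSum hg x).fderiv, hu]

lemma pd2_sepHam_cross_block_eq_zero (hφ : Differentiable ℝ φ) (hg : ∀ l, ContDiff ℝ 2 (g l))
    (x : Pha n) {j : Fin n} {u w : Pha n} (hu : u.1 = 0) (huj : blockProj j u = 0)
    (hw : w.1 = 0) (hwj : ∀ l ≠ j, blockProj l w = 0) :
    pd2 (sepHam φ g) x u w = 0 := by
  have hg1 : ∀ l, Differentiable ℝ (g l) := fun l => (hg l).differentiable two_ne_zero
  have hKw : (fun y => fderiv ℝ (sepHam φ g) y w)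
      = fun y => φ y.1 * fderiv ℝ (g j) (blockProj j y) (blockProj j w) := by
    funext y
    rw [← pd, pd_sepHam_of_time_eq_zero hφ hg1 y hw,
      fderiv_blockSum_apply_of_mem_block hg1 hwj]
  have hh : Differentiable ℝ fun z => fderiv ℝ (g j) z (blockProj j w) := by
    have := hg j
    fun_prop
  have hD : HasFDerivAt
      (fun y : Pha n => φ y.1 * fderiv ℝ (g j) (blockProj j y) (blockProj j w)) _ x :=
    ((hφ x.1).hasDerivAt.comp_hasFDerivAt x hasFDerivAt_fst).mul
      ((hh _).hasFDerivAt.comp x (blockProj j).hasFDerivAt)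
  rw [pd2, hKw, hD.fderiv]
  simp [hu, huj]

lemma sepHam_forbat_cross (hφ : Differentiable ℝ φ) (hg : ∀ l, ContDiff ℝ 2 (g l))
    (x : Pha n) {i j : Fin n} (hij : i ≠ j) :
    pd (sepHam φ g) x (eP i) *
        (pd2 (sepHam φ g) x (eQ i) (eQ j) * pd (sepHam φ g) x (eP j)
          - pd2 (sepHam φ g) x (eQ i) (eP j) * pd (sepHam φ g) x (eQ j))
      = pd (sepHam φ g) x (eQ i) *
        (pd2 (sepHam φ g) x (eP i) (eQ j) * pd (sepHam φ g) x (eP j)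
          - pd2 (sepHam φ g) x (eP i) (eP j) * pd (sepHam φ g) x (eQ j)) := by
  have hQj : ∀ l ≠ j, blockProj l (eQ j) = 0 := fun l hl => blockProj_eQ_of_ne hl
  have hPj : ∀ l ≠ j, blockProj l (eP j) = 0 := fun l hl => blockProj_eP_of_ne hl
  have hQi := blockProj_eQ_of_ne hij.symm
  have hPi := blockProj_eP_of_ne hij.symm
  rw [pd2_sepHam_cross_block_eq_zero hφ hg x rfl hQi rfl hQj,
    pd2_sepHam_cross_block_eq_zero hφ hg x rfl hQi rfl hPj,
    pd2_sepHam_cross_block_eq_zero hφ hg x rfl hPi rfl hQj,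
    pd2_sepHam_cross_block_eq_zero hφ hg x rfl hPi rfl hPj]
  ring

lemma sepHam_forbat_time (hφ : ContDiff ℝ 2 φ) (hg : ∀ l, Differentiable ℝ (g l))
    (x : Pha n) {u w : Pha n} (hu : u.1 = 0) (hw : w.1 = 0) :
    pd (sepHam φ g) x u * pd2 (sepHam φ g) x w eT
      = pd (sepHam φ g) x w * pd2 (sepHam φ g) x u eT := by
  have hφ1 := hφ.differentiable two_ne_zero
  rw [pd_sepHam_of_time_eq_zero hφ1 hg x hu, pd_sepHam_of_time_eq_zero hφ1 hg x hw,
    pd2_sepHam_eT hφ hg x hu, pd2_sepHam_eT hφ hg x hw]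
  ring

end

def kexBlock (c a1 a2 : ℝ) : Fin 2 → ℝ × ℝ → ℝ := fun l z =>
  z.2 ^ 2 + z.1 ^ 2 + c * (z.2 * z.1) + ![a1 / 2 + a2 / 6, a1 / 2 - a2 / 6] l * z.1 ^ 3

lemma contDiff_kexBlock (c a1 a2 : ℝ) (l : Fin 2) : ContDiff ℝ 2 (kexBlock c a1 a2 l) := by
  unfold kexBlock
  fun_prop

lemma Kex_eq_sepHam (c a1 a2 : ℝ) : Kex c a1 a2 = sepHam (· ^ 2) (kexBlock c a1 a2) := by
  funext x
  simp only [Kex, sepHam, blockSum, kexBlock, blockProj_apply, Fin.sum_univ_two,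
    Matrix.cons_val_zero, Matrix.cons_val_one]
  ring

theorem Kex_satisfies_forbat_general (c a1 a2 : ℝ) (x : Pha 2) :
    (∀ i j : Fin 2, i ≠ j →
        pd (Kex c a1 a2) x (eP i) *
            (pd2 (Kex c a1 a2) x (eQ i) (eQ j) * pd (Kex c a1 a2) x (eP j)
              - pd2 (Kex c a1 a2) x (eQ i) (eP j) * pd (Kex c a1 a2) x (eQ j))
          = pd (Kex c a1 a2) x (eQ i) *
            (pd2 (Kex c a1 a2) x (eP i) (eQ j) * pd (Kex c a1 a2) x (eP j)
              - pd2 (Kex c a1 a2) x (eP i) (eP j) * pd (Kex c a1 a2) x (eQ j)))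
      ∧ (∀ i : Fin 2,
          pd (Kex c a1 a2) x (eP i) * pd2 (Kex c a1 a2) x (eQ i) eT
            = pd (Kex c a1 a2) x (eQ i) * pd2 (Kex c a1 a2) x (eP i) eT) := by
  have hφ : ContDiff ℝ 2 fun t : ℝ => t ^ 2 := by fun_prop
  have hg := contDiff_kexBlock c a1 a2
  rw [Kex_eq_sepHam]
  exact ⟨fun i j hij => sepHam_forbat_cross (hφ.differentiable two_ne_zero) hg x hij,
    fun i => sepHam_forbat_time hφ (fun l => (hg l).differentiable two_ne_zero) x rfl rfl⟩

/-- The Hamiltonian `K` of the example satisfies both Forbat conditions on the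
domain `t > 0`. -/
theorem Kex_satisfies_forbat (c a1 a2 : ℝ) (x : Pha 2) (ht : 0 < x.1) :
    (∀ i j : Fin 2, i ≠ j →
        pd (Kex c a1 a2) x (eP i) *
            (pd2 (Kex c a1 a2) x (eQ i) (eQ j) * pd (Kex c a1 a2) x (eP j)
              - pd2 (Kex c a1 a2) x (eQ i) (eP j) * pd (Kex c a1 a2) x (eQ j))
          = pd (Kex c a1 a2) x (eQ i) *
            (pd2 (Kex c a1 a2) x (eP i) (eQ j) * pd (Kex c a1 a2) x (eP j)
              - pd2 (Kex c a1 a2) x (eP i) (eP j) * pd (Kex c a1 a2) x (eQ j)))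
      ∧ (∀ i : Fin 2,
          pd (Kex c a1 a2) x (eP i) * pd2 (Kex c a1 a2) x (eQ i) eT
            = pd (Kex c a1 a2) x (eQ i) * pd2 (Kex c a1 a2) x (eP i) eT) :=
  Kex_satisfies_forbat_general c a1 a2 x
end
end

section
/- Let H(t,q,p) = ½p₁² + ½t p₂² + 2t³(t q₁² + q₂²) + (c t² − t⁻¹)p₁q₁ + (c t² − ½t⁻¹)p₂q₂ + α₁t⁵q₁³ + α₂t^{9/2}q₁²q₂ + 3α₁t⁴q₁q₂² + (1/3)α₂t^{7/2}q₂³ on the domain t > 0. Under the time-dependent canonical transformation Q₁ = t q₁ + √t q₂, Q₂ = t q₁ − √t q₂, p₁ = t(P₁+P₂), p₂ = √t(P₁−P₂), the transformed Hamiltonian K = H − Σₗ pₗ ∂qₗ/∂t equals K(t,Q,P) = t²( P₁²+P₂²+Q₁²+Q₂² + c(P₁Q₁+P₂Q₂) + ½α₁(Q₁³+Q₂³) + (1/6)α₂(Q₁³−Q₂³) ). -/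
/-- Under the time-dependent canonical transformation
`Q₁ = t q₁ + √t q₂`, `Q₂ = t q₁ - √t q₂`, `p₁ = t(P₁+P₂)`, `p₂ = √t(P₁-P₂)`,
the Hamiltonian (6.8) transforms via `K = H - Σₗ pₗ ∂qₗ/∂t` into the separable
Hamiltonian (6.10). -/
theorem example_hamiltonian_transformation (c a1 a2 : ℝ) (t : ℝ) (ht : 0 < t)
    (Q1 Q2 P1 P2 : ℝ) :
    (fun q1 q2 p1 p2 =>
        (1 / 2) * p1 ^ 2 + (1 / 2) * t * p2 ^ 2
          + 2 * t ^ 3 * (t * q1 ^ 2 + q2 ^ 2)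
          + (c * t ^ 2 - t⁻¹) * p1 * q1
          + (c * t ^ 2 - (1 / 2) * t⁻¹) * p2 * q2
          + a1 * t ^ 5 * q1 ^ 3
          + a2 * t ^ ((9 : ℝ) / 2) * q1 ^ 2 * q2
          + 3 * a1 * t ^ 4 * q1 * q2 ^ 2
          + (1 / 3) * a2 * t ^ ((7 : ℝ) / 2) * q2 ^ 3
          - (p1 * (-(Q1 + Q2) / (2 * t ^ 2))
              + p2 * (-(Q1 - Q2) / (4 * t ^ ((3 : ℝ) / 2)))))
      ((Q1 + Q2) / (2 * t)) ((Q1 - Q2) / (2 * Real.sqrt t))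
      (t * (P1 + P2)) (Real.sqrt t * (P1 - P2))
    = t ^ 2 * (P1 ^ 2 + P2 ^ 2 + Q1 ^ 2 + Q2 ^ 2
        + c * (P1 * Q1 + P2 * Q2)
        + (1 / 2) * a1 * (Q1 ^ 3 + Q2 ^ 3)
        + (1 / 6) * a2 * (Q1 ^ 3 - Q2 ^ 3)) := by
  simp only []
  have hs : 0 < Real.sqrt t := Real.sqrt_pos.2 ht
  set s := Real.sqrt t with hsdef
  have hts : t = s ^ 2 := (Real.sq_sqrt ht.le).symm
  have hpow : ∀ n : ℕ, t ^ ((n : ℝ) / 2) = s ^ n := by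
    intro n
    rw [hsdef, Real.sqrt_eq_rpow, ← Real.rpow_natCast (t ^ ((1:ℝ)/2)) n,
      ← Real.rpow_mul ht.le]
    norm_num
    congr 1
    ring
  have h9 : t ^ ((9 : ℝ)/2) = s ^ 9 := by exact_mod_cast hpow 9
  have h7 : t ^ ((7 : ℝ)/2) = s ^ 7 := by exact_mod_cast hpow 7
  have h3 : t ^ ((3 : ℝ)/2) = s ^ 3 := by exact_mod_cast hpow 3
  rw [h9, h7, h3, hts]
  field_simp
  ring
end
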